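/- In the three-state counterexample gambling game with J = [0,1/4], min I = 0 and max I = 1/4, write x_λ = v_λ(a,a') and y_λ = v_λ(a,b'). If λ_n → 0 is a sequence of discount factors such that for each n the open interval (√(λollows_n)/2, 2√(λ_n)) does not intersect I, then limsup_n y_{λ_n} ≤ 4/9. -/

import Mathlib

open MeasureTheory Set Filter Topology

noncomputable section
namespace GG

abbrev PM (S : Type*) [MeasurableSpace S] := MeasureTheory.ProbabilityMeasure S

variable {S : Type*} [MeasurableSpace S]

/-- Dirac probability measure. -/
def dirac (s : S) : PM S := ⟨MeasureTheory.Measure.dirac s, inferInstance⟩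

/-- Integral of a function against a probability measure (the affine extension `f̃`). -/
def iPM (f : S → ℝ) (p : PM S) : ℝ := ∫ s, f s ∂(p : MeasureTheory.Measure S)

/-- `r` is the mixture `t p + (1-t) q`. -/
def IsMix (t : NNReal) (p q r : PM S) : Prop :=
  (r : MeasureTheory.Measure S)
    = (t : ENNReal) • (p : MeasureTheory.Measure S)
      + ((1 : ENNReal) - (t : ENNReal)) • (q : MeasureTheory.Measure S)

/-- Convexity of a set of probability measures. -/
def PMConvex (A : Set (PM S)) : Prop :=
  ∀ p ∈ A, ∀ q ∈ A, ∀ t : NNReal, t ≤ 1 → ∀ r : PM S, IsMix t p q r → r ∈ A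

/-- Convexity of a set of pairs of probability measures. -/
def PMConvex2 (A : Set (PM S × PM S)) : Prop :=
  ∀ a ∈ A, ∀ b ∈ A, ∀ t : NNReal, t ≤ 1 → ∀ c : PM S × PM S,
    IsMix t a.1 b.1 c.1 → IsMix t a.2 b.2 c.2 → c ∈ A

/-- Convex hull of a set of probability measures. -/
def convexHullPM (A : Set (PM S)) : Set (PM S) := ⋂₀ {T | A ⊆ T ∧ PMConvex T}

/-- Convex hull of a set of pairs of probability measures. -/
def convexHull2 (A : Set (PM S × PM S)) : Set (PM S × PM S) := ⋂₀ {T | A ⊆ T ∧ PMConvex2 T}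

/-- Kantorovich–Rubinstein distance. -/
def dKR {S : Type*} [MeasurableSpace S] [PseudoMetricSpace S] (p q : PM S) : ℝ :=
  sSup {r | ∃ f : S → ℝ, LipschitzWith 1 f ∧ r = |iPM f p - iPM f q|}

def argmaxOn {α : Type*} (f : α → ℝ) (A : Set α) : Set α := {p ∈ A | ∀ q ∈ A, f q ≤ f p}

def argminOn {α : Type*} (f : α → ℝ) (A : Set α) : Set α := {p ∈ A | ∀ q ∈ A, f p ≤ f q}

section Topo

variable [TopologicalSpace S] [OpensMeasurableSpace S]

/-- Graph of the linear extension `Γ̃`: the closed convex hull of the graph of `Γ`. -/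
def tGraph (Γ : S → Set (PM S)) : Set (PM S × PM S) :=
  closure (convexHull2 {z | ∃ x : S, z.1 = dirac x ∧ z.2 ∈ Γ x})

/-- The linear extension `Γ̃ : Δ(S) ⇉ Δ(S)`. -/
def tStep (Γ : S → Set (PM S)) (p : PM S) : Set (PM S) := {q | (p, q) ∈ tGraph Γ}

/-- Iterates `Γ̃ⁿ`, with `Γ̃⁰(p) = {p}` and `Γ̃^{n+1} = Γ̃ⁿ ∘ Γ̃`. -/
def tIter (Γ : S → Set (PM S)) : ℕ → PM S → Set (PM S)
  | 0, p => {p}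
  | n + 1, p => {r | ∃ q ∈ tStep Γ p, r ∈ tIter Γ n q}

/-- The reachable set `Γ^∞(x)`: closure of `⋃ₙ Γ̃ⁿ(δ_x)`. -/
def reach (Γ : S → Set (PM S)) (x : S) : Set (PM S) :=
  closure (⋃ n : ℕ, tIter Γ n (dirac x))

/-- There is a bounded measurable lower semicontinuous `φ` whose (expectation) argmax over
`R x` is exactly `{δ_x}`, for every `x`. -/
def AcyclicFor (R : S → Set (PM S)) : Prop :=
  ∃ φ : S → ℝ, Measurable φ ∧ (∃ C : ℝ, ∀ s, |φ s| ≤ C) ∧ LowerSemicontinuous φ ∧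
    ∀ x : S, argmaxOn (iPM φ) (R x) = {dirac x}

/-- There is a bounded measurable upper semicontinuous `ψ` whose (expectation) argmin over
`R y` is exactly `{δ_y}`, for every `y`. -/
def AcyclicForMin (R : S → Set (PM S)) : Prop :=
  ∃ ψ : S → ℝ, Measurable ψ ∧ (∃ C : ℝ, ∀ s, |ψ s| ≤ C) ∧ UpperSemicontinuous ψ ∧
    ∀ y : S, argminOn (iPM ψ) (R y) = {dirac y}

end Topo

section TwoPlayers

variable {X Y : Type*} [MeasurableSpace X] [MeasurableSpace Y]

/-- The bi-affine extension `ṽ(p,q) = ∫∫ v dp dq`. -/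
def iXY (v : X × Y → ℝ) (p : PM X) (q : PM Y) : ℝ :=
  ∫ x, ∫ y, v (x, y) ∂(q : MeasureTheory.Measure Y) ∂(p : MeasureTheory.Measure X)

/-- `v` is excessive: `v(x,y) = max_{p ∈ Γ(x)} ṽ(p,y)`. -/
def Excessive (Γ : X → Set (PM X)) (v : X × Y → ℝ) : Prop :=
  ∀ x : X, ∀ y : Y, IsGreatest ((fun p => iXY v p (dirac y)) '' Γ x) (v (x, y))

/-- `v` is depressive: `v(x,y) = min_{q ∈ Λ(y)} ṽ(x,q)`. -/
def Depressive (Λ : Y → Set (PM Y)) (v : X × Y → ℝ) : Prop :=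
  ∀ x : X, ∀ y : Y, IsLeast ((fun q => iXY v (dirac x) q) '' Λ y) (v (x, y))

/-- `v` is balanced: `v(x,y) = max_{p ∈ Γ(x)} min_{q ∈ Λ(y)} ṽ(p,q)
    = min_{q ∈ Λ(y)} max_{p ∈ Γ(x)} ṽ(p,q)`. -/
def Balanced (Γ : X → Set (PM X)) (Λ : Y → Set (PM Y)) (v : X × Y → ℝ) : Prop :=
  ∀ x : X, ∀ y : Y,
    IsGreatest {r | ∃ p ∈ Γ x, IsLeast (iXY v p '' Λ y) r} (v (x, y)) ∧
    IsLeast {r | ∃ q ∈ Λ y, IsGreatest ((fun p => iXY v p q) '' Γ x) r} (v (x, y))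

variable [TopologicalSpace X] [OpensMeasurableSpace X] [TopologicalSpace Y] [OpensMeasurableSpace Y]

/-- Property P1: for all `(x,y)` there is `p ∈ Γ^∞(x)` with `v(x,y) = ṽ(p,y) ≤ ũ(p,y)`. -/
def P1 (Γ : X → Set (PM X)) (u v : X × Y → ℝ) : Prop :=
  ∀ x : X, ∀ y : Y, ∃ p ∈ reach Γ x,
    v (x, y) = iXY v p (dirac y) ∧ iXY v p (dirac y) ≤ iXY u p (dirac y)

/-- Property P2: for all `(x,y)` there is `q ∈ Λ^∞(y)` with `v(x,y) = ṽ(x,q) ≥ ũ(x,q)`. -/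
def P2 (Λ : Y → Set (PM Y)) (u v : X × Y → ℝ) : Prop :=
  ∀ x : X, ∀ y : Y, ∃ q ∈ reach Λ y,
    v (x, y) = iXY v (dirac x) q ∧ iXY u (dirac x) q ≤ iXY v (dirac x) q

/-- `w` satisfies the Shapley fixed point equation for discount factor `lam`:
`w(x,y) = max_{p∈Γ(x)} min_{q∈Λ(y)} (λ u(x,y) + (1-λ) w̃(p,q))
        = min_{q∈Λ(y)} max_{p∈Γ(x)} (λ u(x,y) + (1-λ) w̃(p,q))`. -/
def ShapleyEq (Γ : X → Set (PM X)) (Λ : Y → Set (PM Y)) (u : X × Y → ℝ)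
    (lam : ℝ) (w : X × Y → ℝ) : Prop :=
  ∀ x : X, ∀ y : Y,
    IsGreatest {r | ∃ p ∈ Γ x,
      IsLeast ((fun q => lam * u (x, y) + (1 - lam) * iXY w p q) '' Λ y) r} (w (x, y)) ∧
    IsLeast {r | ∃ q ∈ Λ y,
      IsGreatest ((fun p => lam * u (x, y) + (1 - lam) * iXY w p q) '' Γ x) r} (w (x, y))

end TwoPlayers

/-- A standard gambling game: compact metric state spaces, continuous payoff,
continuous transition multifunctions with nonempty convex compact values,
leavable and non expansive. -/
structure StdGame (X Y : Type*) [MetricSpace X] [MeasurableSpace X] [OpensMeasurableSpace X]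
    [MetricSpace Y] [MeasurableSpace Y] [OpensMeasurableSpace Y] where
  G : X → Set (PM X)
  L : Y → Set (PM Y)
  u : X × Y → ℝ
  u_cont : Continuous u
  G_ne : ∀ x, (G x).Nonempty
  G_cvx : ∀ x, PMConvex (G x)
  G_cpt : ∀ x, IsCompact (G x)
  G_cont : ∀ ε : ℝ, 0 < ε → ∃ α : ℝ, 0 < α ∧ ∀ x x' : X, dist x x' ≤ α →
    ∀ p ∈ G x, ∃ p' ∈ G x', dKR p p' ≤ ε
  G_leav : ∀ x, dirac x ∈ G x
  G_nonexp : ∀ x x' : X, ∀ p ∈ G x, ∃ p' ∈ G x', dKR p p' ≤ dist x x'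
  L_ne : ∀ y, (L y).Nonempty
  L_cvx : ∀ y, PMConvex (L y)
  L_cpt : ∀ y, IsCompact (L y)
  L_cont : ∀ ε : ℝ, 0 < ε → ∃ α : ℝ, 0 < α ∧ ∀ y y' : Y, dist y y' ≤ α →
    ∀ q ∈ L y, ∃ q' ∈ L y', dKR q q' ≤ ε
  L_leav : ∀ y, dirac y ∈ L y
  L_nonexp : ∀ y y' : Y, ∀ q ∈ L y, ∃ q' ∈ L y', dKR q q' ≤ dist y y'

end GG

namespace GG

/-! The three-state counterexample gambling game. -/

/-- Three states a, b, c (Player 2 uses the primed copy a', b', c' of the same type). -/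
inductive St : Type
  | a | b | c
deriving DecidableEq

instance instFintypeSt : Fintype St := ⟨{St.a, St.b, St.c}, fun x => by cases x <;> simp⟩

instance : TopologicalSpace St := ⊥
instance : DiscreteTopology St := ⟨rfl⟩
instance : MeasurableSpace St := ⊤
instance : BorelSpace St := ⟨(borel_eq_top_of_discrete (α := St)).symm⟩

/-- Generator: probability measures of the form
(1 - t - t^2) delta_x + t delta_y + t^2 delta_z for t in the parameter set I. -/
def gen (x y z : St) (I : Set ℝ) : Set (PM St) :=
  {p | ∃ t ∈ I, ((p {x} : NNReal) : ℝ) = 1 - t - t ^ 2 ∧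
    ((p {y} : NNReal) : ℝ) = t ∧ ((p {z} : NNReal) : ℝ) = t ^ 2}

/-- The transition multifunction of the counterexample, for the parameter set I:
Gam(c) = {delta_c}, Gam(a) = conv gen(a,b,c), Gam(b) = conv gen(b,a,c). -/
def Gam (I : Set ℝ) : St → Set (PM St)
  | St.a => convexHullPM (gen St.a St.b St.c I)
  | St.b => convexHullPM (gen St.b St.a St.c I)
  | St.c => {dirac St.c}

/-- The payoff: 0 on the diagonal and 1 off the diagonal. -/
def pay : St × St → ℝ := fun z => if z.1 = z.2 then 0 else 1

/-- The candidate limit value with parameter t: rows a, b equal t on columns a', b',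
equal 1 on column c'; row c identically 0. -/
def limitVal (t : ℝ) : St × St → ℝ := fun z =>
  match z with
  | (St.c, _) => 0
  | (_, St.c) => 1
  | _ => t

end GG

/-!
Comparison principle: if at every state Player 2 has a one-shot move `q` such that
`λ u + (1 - λ) φ̃(p, q) ≤ φ` against every move `p` of Player 1, then `v_λ ≤ φ`. With `σ = √λ`
such a `φ` is written down explicitly, with `φ(a, b') = 4/9 + O(σ)`; Player 2 stays put on the
diagonal, moves with parameter `σ` off it and with parameter `1/4` against `c`. At `(a, a')` the
inequality holds as soon as Player 1's parameter avoids `(σ/2, 2σ)`, which is what the gap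
hypothesis provides; the probability `1/16 = (1/4)²` of Player 2's jump to `c'` forces
`φ(c, a') = 16σ²`.
-/

namespace GG

section ProbabilityMeasure

variable {S : Type*} [MeasurableSpace S]

lemma subset_convexHullPM (A : Set (PM S)) : A ⊆ convexHullPM A :=
  fun _ hp _ hT => hT.1 hp

lemma convexHullPM_subset {A T : Set (PM S)} (hAT : A ⊆ T) (hT : PMConvex T) :
    convexHullPM A ⊆ T :=
  fun _ hp => hp T ⟨hAT, hT⟩

lemma iPM_const (c : ℝ) (p : PM S) : iPM (fun _ => c) p = c := by
  simp [iPM]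

variable [MeasurableSingletonClass S]

lemma iPM_dirac (f : S → ℝ) (s : S) : iPM f (dirac s) = f s :=
  integral_dirac f s

variable [Finite S]

lemma iPM_mono {f g : S → ℝ} (h : f ≤ g) (p : PM S) : iPM f p ≤ iPM g p :=
  integral_mono .of_finite .of_finite h

lemma iPM_add_const (f : S → ℝ) (c : ℝ) (p : PM S) : iPM (fun s => f s + c) p = iPM f p + c := by
  rw [iPM, integral_add .of_finite .of_finite, integral_const]
  simp [iPM]

lemma iPM_const_add_mul (c d : ℝ) (f : S → ℝ) (p : PM S) :
    iPM (fun s => c + d * f s) p = c + d * iPM f p := by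
  rw [iPM, integral_add .of_finite .of_finite, integral_const, integral_const_mul]
  simp [iPM]

lemma iPM_of_isMix {t : NNReal} (ht : t ≤ 1) {p q r : PM S} (hr : IsMix t p q r) (f : S → ℝ) :
    iPM f r = t * iPM f p + (1 - t) * iPM f q := by
  rw [iPM, hr, integral_add_measure (Integrable.of_finite.smul_measure ENNReal.coe_ne_top)
    (Integrable.of_finite.smul_measure (by simp)), integral_smul_measure,
    integral_smul_measure, ENNReal.toReal_sub_of_le (by exact_mod_cast ht) ENNReal.one_ne_top]
  simp [iPM]

lemma pmConvex_setOf_iPM_le (f : S → ℝ) (r : ℝ) : PMConvex {p : PM S | iPM f p ≤ r} := by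
  intro p hp q hq t ht m hm
  have ht0 : (0 : ℝ) ≤ t := t.2
  have ht1 : (t : ℝ) ≤ 1 := ht
  simp only [mem_ofPred_eq, iPM_of_isMix ht hm] at hp hq ⊢
  nlinarith

end ProbabilityMeasure

section TwoPlayer

variable {X Y : Type*} [MeasurableSpace X] [MeasurableSpace Y]

lemma iXY_eq_iPM (v : X × Y → ℝ) (p : PM X) (q : PM Y) :
    iXY v p q = iPM (fun x => iPM (fun y => v (x, y)) q) p := rfl

def IsSupersolution (Γ : X → Set (PM X)) (Λ : Y → Set (PM Y)) (u : X × Y → ℝ) (lam : ℝ)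
    (φ : X × Y → ℝ) : Prop :=
  ∀ x y, ∃ q ∈ Λ y, ∀ p ∈ Γ x, lam * u (x, y) + (1 - lam) * iXY φ p q ≤ φ (x, y)

variable [Finite X] [Finite Y] [MeasurableSingletonClass X] [MeasurableSingletonClass Y]

lemma iXY_le_add {v φ : X × Y → ℝ} {D : ℝ} (h : ∀ z, v z ≤ φ z + D) (p : PM X) (q : PM Y) :
    iXY v p q ≤ iXY φ p q + D := by
  rw [iXY_eq_iPM, iXY_eq_iPM, ← iPM_add_const]
  refine iPM_mono (fun x => ?_) p
  rw [← iPM_add_const]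
  exact iPM_mono (fun y => h (x, y)) q

lemma const_le_iXY {v : X × Y → ℝ} {C : ℝ} (h : ∀ z, C ≤ v z) (p : PM X) (q : PM Y) :
    C ≤ iXY v p q := by
  rw [iXY_eq_iPM, ← iPM_const C p]
  refine iPM_mono (fun x => ?_) p
  rw [← iPM_const C q]
  exact iPM_mono (fun y => h (x, y)) q

variable {Γ : X → Set (PM X)} {Λ : Y → Set (PM Y)} {u w : X × Y → ℝ} {lam : ℝ}

/-- Comparison principle: at a point where `w - φ` is maximal, Player 1's optimal `p` played
against the `q` of the supersolution gives `D ≤ (1 - λ) D` for `D = max (w - φ)`. -/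
theorem ShapleyEq.le_of_isSupersolution (hlam : lam ∈ Ioc 0 1) (hw : ShapleyEq Γ Λ u lam w)
    {φ : X × Y → ℝ} (hφ : IsSupersolution Γ Λ u lam φ) : w ≤ φ := by
  cases isEmpty_or_nonempty (X × Y) with
  | inl => exact fun z => isEmptyElim z
  | inr =>
    obtain ⟨⟨x, y⟩, hmax⟩ := Finite.exists_max (fun z => w z - φ z)
    obtain ⟨q, hq, hφq⟩ := hφ x y
    obtain ⟨p, hp, hleast⟩ := (hw x y).1.1
    have hwp : w (x, y) ≤ lam * u (x, y) + (1 - lam) * iXY w p q := hleast.2 ⟨q, hq, rfl⟩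
    have hwφ : iXY w p q ≤ iXY φ p q + (w (x, y) - φ (x, y)) :=
      iXY_le_add (fun z => by linarith [hmax z]) p q
    have hD : w (x, y) - φ (x, y) ≤ 0 := by
      nlinarith [hφq p hp, mul_le_mul_of_nonneg_left hwφ (sub_nonneg.2 hlam.2), hlam.1]
    exact fun z => by linarith [hmax z]

theorem ShapleyEq.nonneg (hlam : lam ∈ Ioc 0 1) (hw : ShapleyEq Γ Λ u lam w)
    (hu : ∀ z, 0 ≤ u z) : 0 ≤ w := by
  cases isEmpty_or_nonempty (X × Y) with
  | inl => exact fun z => isEmptyElim z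
  | inr =>
    obtain ⟨⟨x, y⟩, hmin⟩ := Finite.exists_min w
    obtain ⟨p, -, ⟨q, -, hval⟩, -⟩ := (hw x y).1.1
    have hwq : w (x, y) ≤ iXY w p q := const_le_iXY hmin p q
    have hxy : 0 ≤ w (x, y) := by
      nlinarith [mul_le_mul_of_nonneg_left hwq (sub_nonneg.2 hlam.2), hu (x, y), hlam.1]
    exact fun z => hxy.trans (hmin z)

end TwoPlayer

instance : MeasurableSingletonClass St := ⟨fun _ => trivial⟩

lemma St.univ_eq {x y z : St} (hxy : x ≠ y) (hxz : x ≠ z) (hyz : y ≠ z) :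
    (Finset.univ : Finset St) = {x, y, z} := by
  cases x <;> cases y <;> cases z <;> first | decide | simp at hxy hxz hyz

lemma iPM_eq_of_masses {x y z : St} (hxy : x ≠ y) (hxz : x ≠ z) (hyz : y ≠ z) {p : PM St}
    {t : ℝ} (hx : (p {x} : ℝ) = 1 - t - t ^ 2) (hy : (p {y} : ℝ) = t) (hz : (p {z} : ℝ) = t ^ 2)
    (f : St → ℝ) : iPM f p = (1 - t - t ^ 2) * f x + t * f y + t ^ 2 * f z := by
  rw [iPM, integral_fintype .of_finite, St.univ_eq hxy hxz hyz,
    Finset.sum_insert (by simp [hxy, hxz]), Finset.sum_pair hyz]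
  simp only [ProbabilityMeasure.measureReal_eq_coe_coeFn, hx, hy, hz, smul_eq_mul]
  ring

lemma exists_mem_gen {x y z : St} (hxy : x ≠ y) (hxz : x ≠ z) (hyz : y ≠ z) {I : Set ℝ}
    {t : ℝ} (ht : t ∈ I) (ht0 : 0 ≤ t) (ht1 : t ≤ 1 / 2) :
    ∃ q ∈ gen x y z I, ∀ f : St → ℝ, iPM f q = (1 - t - t ^ 2) * f x + t * f y + t ^ 2 * f z := by
  have hx0 : 0 ≤ 1 - t - t ^ 2 := by nlinarith
  let μ : Measure St := ENNReal.ofReal (1 - t - t ^ 2) • Measure.dirac x +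
    ENNReal.ofReal t • Measure.dirac y + ENNReal.ofReal (t ^ 2) • Measure.dirac z
  have hμ : IsProbabilityMeasure μ := by
    constructor
    simp only [μ, Measure.add_apply, Measure.smul_apply, measure_univ, smul_eq_mul, mul_one]
    rw [← ENNReal.ofReal_add hx0 ht0, ← ENNReal.ofReal_add (by positivity) (by positivity)]
    simp only [ENNReal.ofReal_eq_one]
    ring
  let q : PM St := ⟨μ, hμ⟩
  have hx : (q {x} : ℝ) = 1 - t - t ^ 2 := by
    simp [q, μ, hxy, hxz, ENNReal.coe_toNNReal_eq_toReal, hx0]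
  have hy : (q {y} : ℝ) = t := by
    simp [q, μ, hxy.symm, hyz, ENNReal.coe_toNNReal_eq_toReal, ht0]
  have hz : (q {z} : ℝ) = t ^ 2 := by
    simp [q, μ, hxz.symm, hyz.symm, ENNReal.coe_toNNReal_eq_toReal, sq_nonneg]
  exact ⟨q, ⟨t, ht, hx, hy, hz⟩, iPM_eq_of_masses hxy hxz hyz hx hy hz⟩

lemma iPM_le_of_mem_convexHullPM_gen {x y z : St} (hxy : x ≠ y) (hxz : x ≠ z) (hyz : y ≠ z)
    {I : Set ℝ} {f : St → ℝ} {r : ℝ}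
    (h : ∀ t ∈ I, (1 - t - t ^ 2) * f x + t * f y + t ^ 2 * f z ≤ r) :
    ∀ p ∈ convexHullPM (gen x y z I), iPM f p ≤ r :=
  convexHullPM_subset
    (fun _ ⟨t, ht, hx, hy, hz⟩ => (iPM_eq_of_masses hxy hxz hyz hx hy hz f).trans_le (h t ht))
    (pmConvex_setOf_iPM_le f r)

lemma affine_iXY_le_of_mem_convexHullPM_gen {x y z : St} (hxy : x ≠ y) (hxz : x ≠ z)
    (hyz : y ≠ z) {I : Set ℝ} {φ : St × St → ℝ} {q : PM St} {c d r : ℝ}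
    (h : ∀ t ∈ I, c + d * ((1 - t - t ^ 2) * iPM (fun y' => φ (x, y')) q +
      t * iPM (fun y' => φ (y, y')) q + t ^ 2 * iPM (fun y' => φ (z, y')) q) ≤ r) :
    ∀ p ∈ convexHullPM (gen x y z I), c + d * iXY φ p q ≤ r := by
  intro p hp
  rw [iXY_eq_iPM, ← iPM_const_add_mul]
  exact iPM_le_of_mem_convexHullPM_gen hxy hxz hyz (fun t ht => by linear_combination h t ht) p hp

def supersolution (σ : ℝ) : St × St → ℝ
  | (St.a, St.a) | (St.b, St.b) => 4 / 9 + σ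
  | (St.a, St.b) | (St.b, St.a) => 4 / 9 + σ + (10 / 9 + 5 / 2 * σ - 32 * σ ^ 2) * σ
  | (St.a, St.c) | (St.b, St.c) => 1
  | (St.c, St.a) | (St.c, St.b) => 16 * σ ^ 2
  | (St.c, St.c) => 0

section Inequalities

variable {σ t : ℝ}

/-- Writing `X`, `Z` for the values at `(a, a')`, `(c, a')`, the coefficient `M = 5X/2 - 2Z` of
`σ` in the value at `(a, b')` makes `σ²X` minus the one-step gain `Mσt - (X - Z)t²` equal to
`(t - 2σ)((X - Z)t - σX/2)`, which is nonnegative off the gap `(σ/2, 2σ)`. -/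
lemma supersolution_diag_ineq (hσ0 : 0 < σ) (hσ1 : σ ≤ 1 / 100) (ht0 : 0 ≤ t)
    (ht : t ∉ Ioo (σ / 2) (2 * σ)) :
    (1 - σ ^ 2) * ((1 - t - t ^ 2) * supersolution σ (St.a, St.a) +
      t * supersolution σ (St.b, St.a) + t ^ 2 * supersolution σ (St.c, St.a)) ≤
      supersolution σ (St.a, St.a) := by
  simp only [supersolution]
  set X := 4 / 9 + σ with hX
  set Z := 16 * σ ^ 2 with hZ
  have hZX : Z ≤ X / 4 := by nlinarith
  have hquad : 0 ≤ (t - 2 * σ) * ((X - Z) * t - σ * X / 2) := by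
    rcases le_or_gt t (σ / 2) with hle | hgt
    · have h2σ : t - 2 * σ ≤ 0 := by linarith
      have hlin : (X - Z) * t - σ * X / 2 ≤ 0 := by nlinarith
      nlinarith
    · have h2σ : 2 * σ ≤ t := not_lt.1 fun hlt => ht ⟨hgt, hlt⟩
      have hlin : 0 ≤ (X - Z) * t - σ * X / 2 := by nlinarith
      nlinarith
  have hgain : (5 / 2 * X - 2 * Z) * σ * t - (X - Z) * t ^ 2 ≤ σ ^ 2 * X := by
    linear_combination hquad
  have hM : 10 / 9 + 5 / 2 * σ - 32 * σ ^ 2 = 5 / 2 * X - 2 * Z := by rw [hX, hZ]; ring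
  have h1σ : 0 ≤ 1 - σ ^ 2 := by nlinarith
  calc (1 - σ ^ 2) * ((1 - t - t ^ 2) * X + t * (X + (10 / 9 + 5 / 2 * σ - 32 * σ ^ 2) * σ) +
        t ^ 2 * Z)
      = (1 - σ ^ 2) * (X + ((5 / 2 * X - 2 * Z) * σ * t - (X - Z) * t ^ 2)) := by
        rw [hM]; ring
    _ ≤ (1 - σ ^ 2) * (X + σ ^ 2 * X) := mul_le_mul_of_nonneg_left (by linarith) h1σ
    _ = X - σ ^ 4 * X := by ring
    _ ≤ X := sub_le_self _ (mul_nonneg (by positivity) (by linarith))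

/-- Player 1's best reply is to stay, and then the defect is `σ²(2 - M - 2X) + O(σ³)`; its leading
coefficient `2 - 9X/2 + O(σ)` vanishes because `X = 4/9 + σ`, which is where `4/9` comes from. -/
lemma supersolution_offDiag_ineq (hσ0 : 0 < σ) (hσ1 : σ ≤ 1 / 100) (ht0 : 0 ≤ t) :
    σ ^ 2 * 1 + (1 - σ ^ 2) *
      ((1 - t - t ^ 2) * ((1 - σ - σ ^ 2) * supersolution σ (St.a, St.b) +
          σ * supersolution σ (St.a, St.a) + σ ^ 2 * supersolution σ (St.a, St.c)) +
        t * ((1 - σ - σ ^ 2) * supersolution σ (St.b, St.b) +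
          σ * supersolution σ (St.b, St.a) + σ ^ 2 * supersolution σ (St.b, St.c)) +
        t ^ 2 * ((1 - σ - σ ^ 2) * supersolution σ (St.c, St.b) +
          σ * supersolution σ (St.c, St.a) + σ ^ 2 * supersolution σ (St.c, St.c))) ≤
      supersolution σ (St.a, St.b) := by
  simp only [supersolution]
  set M := 10 / 9 + 5 / 2 * σ - 32 * σ ^ 2 with hMdef
  set X := 4 / 9 + σ with hXdef
  set A := (1 - σ - σ ^ 2) * (X + M * σ) + σ * X + σ ^ 2 * 1 with hAdef
  have hM : 0 ≤ M := by nlinarith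
  have hBA : (1 - σ - σ ^ 2) * X + σ * (X + M * σ) + σ ^ 2 * 1 ≤ A := by
    nlinarith [mul_nonneg hM hσ0.le]
  have hCA : (1 - σ - σ ^ 2) * (16 * σ ^ 2) + σ * (16 * σ ^ 2) + σ ^ 2 * 0 ≤ A := by
    nlinarith [mul_nonneg hM hσ0.le]
  have hmix : (1 - t - t ^ 2) * A + t * ((1 - σ - σ ^ 2) * X + σ * (X + M * σ) + σ ^ 2 * 1) +
      t ^ 2 * ((1 - σ - σ ^ 2) * (16 * σ ^ 2) + σ * (16 * σ ^ 2) + σ ^ 2 * 0) ≤ A := by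
    nlinarith [mul_nonneg ht0 (sub_nonneg.2 hBA), mul_nonneg (sq_nonneg t) (sub_nonneg.2 hCA)]
  have hstay : σ ^ 2 * 1 + (1 - σ ^ 2) * A ≤ X + M * σ := by
    nlinarith [pow_pos hσ0 3, pow_pos hσ0 4, pow_pos hσ0 5]
  have h1σ : 0 ≤ 1 - σ ^ 2 := by nlinarith
  nlinarith [mul_le_mul_of_nonneg_left hmix h1σ]

end Inequalities

lemma pay_self (x : St) : pay (x, x) = 0 := if_pos rfl

lemma pay_of_ne {x y : St} (h : x ≠ y) : pay (x, y) = 1 := if_neg h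

lemma pay_nonneg (z : St × St) : 0 ≤ pay z := by
  unfold pay
  split_ifs <;> norm_num

lemma St.a_ne_b : St.a ≠ St.b := by decide

lemma St.a_ne_c : St.a ≠ St.c := by decide

lemma St.b_ne_c : St.b ≠ St.c := by decide

section Rows

variable {I : Set ℝ} {σ : ℝ}

lemma supersolution_row_a (hI : I ⊆ Icc 0 (1 / 2)) (hσ0 : 0 < σ) (hσ1 : σ ≤ 1 / 100)
    (hgap : ∀ t ∈ I, t ∉ Ioo (σ / 2) (2 * σ)) (y : St) :
    ∃ q ∈ Gam (Icc 0 (1 / 4)) y, ∀ p ∈ Gam I St.a,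
      σ ^ 2 * pay (St.a, y) + (1 - σ ^ 2) * iXY (supersolution σ) p q ≤
        supersolution σ (St.a, y) := by
  have hab := St.a_ne_b; have hac := St.a_ne_c; have hbc := St.b_ne_c
  cases y
  · obtain ⟨q, hq, hq_eq⟩ :=
      exists_mem_gen hab hac hbc (I := Icc 0 (1 / 4)) (t := 0)
        (by norm_num) le_rfl (by norm_num)
    refine ⟨q, subset_convexHullPM _ hq,
      affine_iXY_le_of_mem_convexHullPM_gen hab hac hbc fun t ht => ?_⟩
    have := supersolution_diag_ineq hσ0 hσ1 (hI ht).1 (hgap t ht)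
    simp only [hq_eq, pay_self, supersolution] at this ⊢
    linear_combination this
  · obtain ⟨q, hq, hq_eq⟩ :=
      exists_mem_gen hab.symm hbc hac (I := Icc 0 (1 / 4)) (t := σ)
        ⟨hσ0.le, by linarith⟩ hσ0.le (by linarith)
    refine ⟨q, subset_convexHullPM _ hq,
      affine_iXY_le_of_mem_convexHullPM_gen hab hac hbc fun t ht => ?_⟩
    have := supersolution_offDiag_ineq hσ0 hσ1 (hI ht).1 (t := t)
    simp only [hq_eq, pay_of_ne hab, supersolution] at this ⊢
    linear_combination this
  · refine ⟨dirac St.c, rfl, affine_iXY_le_of_mem_convexHullPM_gen hab hac hbc fun t _ => ?_⟩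
    simp only [iPM_dirac, pay_of_ne hac, supersolution]
    nlinarith [mul_nonneg (sq_nonneg t) (by nlinarith : (0 : ℝ) ≤ 1 - σ ^ 2)]

lemma supersolution_row_b (hI : I ⊆ Icc 0 (1 / 2)) (hσ0 : 0 < σ) (hσ1 : σ ≤ 1 / 100)
    (hgap : ∀ t ∈ I, t ∉ Ioo (σ / 2) (2 * σ)) (y : St) :
    ∃ q ∈ Gam (Icc 0 (1 / 4)) y, ∀ p ∈ Gam I St.b,
      σ ^ 2 * pay (St.b, y) + (1 - σ ^ 2) * iXY (supersolution σ) p q ≤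
        supersolution σ (St.b, y) := by
  have hab := St.a_ne_b; have hac := St.a_ne_c; have hbc := St.b_ne_c
  cases y
  · obtain ⟨q, hq, hq_eq⟩ :=
      exists_mem_gen hab hac hbc (I := Icc 0 (1 / 4)) (t := σ)
        ⟨hσ0.le, by linarith⟩ hσ0.le (by linarith)
    refine ⟨q, subset_convexHullPM _ hq,
      affine_iXY_le_of_mem_convexHullPM_gen hab.symm hbc hac fun t ht => ?_⟩
    have := supersolution_offDiag_ineq hσ0 hσ1 (hI ht).1 (t := t)
    simp only [hq_eq, pay_of_ne hab.symm, supersolution] at this ⊢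
    linear_combination this
  · obtain ⟨q, hq, hq_eq⟩ :=
      exists_mem_gen hab.symm hbc hac (I := Icc 0 (1 / 4)) (t := 0)
        (by norm_num) le_rfl (by norm_num)
    refine ⟨q, subset_convexHullPM _ hq,
      affine_iXY_le_of_mem_convexHullPM_gen hab.symm hbc hac fun t ht => ?_⟩
    have := supersolution_diag_ineq hσ0 hσ1 (hI ht).1 (hgap t ht)
    simp only [hq_eq, pay_self, supersolution] at this ⊢
    linear_combination this
  · refine ⟨dirac St.c, rfl,
      affine_iXY_le_of_mem_convexHullPM_gen hab.symm hbc hac fun t _ => ?_⟩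
    simp only [iPM_dirac, pay_of_ne hbc, supersolution]
    nlinarith [mul_nonneg (sq_nonneg t) (by nlinarith : (0 : ℝ) ≤ 1 - σ ^ 2)]

lemma supersolution_row_c (y : St) :
    ∃ q ∈ Gam (Icc 0 (1 / 4)) y, ∀ p ∈ Gam I St.c,
      σ ^ 2 * pay (St.c, y) + (1 - σ ^ 2) * iXY (supersolution σ) p q ≤
        supersolution σ (St.c, y) := by
  have hab := St.a_ne_b; have hac := St.a_ne_c; have hbc := St.b_ne_c
  cases y
  · obtain ⟨q, hq, hq_eq⟩ :=
      exists_mem_gen hab hac hbc (I := Icc 0 (1 / 4)) (t := 1 / 4)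
        (by norm_num) (by norm_num) (by norm_num)
    refine ⟨q, subset_convexHullPM _ hq, ?_⟩
    rintro _ rfl
    simp only [iXY_eq_iPM, iPM_dirac, hq_eq, pay_of_ne hac.symm, supersolution]
    nlinarith [sq_nonneg (σ ^ 2)]
  · obtain ⟨q, hq, hq_eq⟩ :=
      exists_mem_gen hab.symm hbc hac (I := Icc 0 (1 / 4)) (t := 1 / 4)
        (by norm_num) (by norm_num) (by norm_num)
    refine ⟨q, subset_convexHullPM _ hq, ?_⟩
    rintro _ rfl
    simp only [iXY_eq_iPM, iPM_dirac, hq_eq, pay_of_ne hbc.symm, supersolution]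
    nlinarith [sq_nonneg (σ ^ 2)]
  · refine ⟨dirac St.c, rfl, ?_⟩
    rintro _ rfl
    simp [iXY_eq_iPM, iPM_dirac, pay_self, supersolution]

theorem isSupersolution_supersolution (hI : I ⊆ Icc 0 (1 / 2)) (hσ0 : 0 < σ)
    (hσ1 : σ ≤ 1 / 100) (hgap : ∀ t ∈ I, t ∉ Ioo (σ / 2) (2 * σ)) :
    IsSupersolution (Gam I) (Gam (Icc 0 (1 / 4))) pay (σ ^ 2) (supersolution σ)
  | St.a => supersolution_row_a hI hσ0 hσ1 hgap
  | St.b => supersolution_row_b hI hσ0 hσ1 hgap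
  | St.c => supersolution_row_c

end Rows

theorem statement15_general
    (I : Set ℝ) (hIsub : I ⊆ Set.Icc 0 (1 / 2))
    (lam : ℕ → ℝ) (hlam : ∀ n, lam n ∈ Set.Ioc (0 : ℝ) 1)
    (hlam0 : Filter.Tendsto lam Filter.atTop (nhds 0))
    (hgap : ∀ n : ℕ, ∀ s ∈ I, s ∉ Set.Ioo (Real.sqrt (lam n) / 2) (2 * Real.sqrt (lam n)))
    (w : ℕ → St × St → ℝ)
    (hsh : ∀ n, ShapleyEq (Gam I) (Gam (Set.Icc 0 (1 / 4))) pay (lam n) (w n)) :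
    Filter.limsup (fun n => w n (St.a, St.b)) Filter.atTop ≤ 4 / 9 := by
  have hσ : Tendsto (fun n => √(lam n)) atTop (𝓝 0) := by
    simpa [Function.comp_def] using (Real.continuous_sqrt.tendsto 0).comp hlam0
  have hφ : Tendsto (fun n => supersolution √(lam n) (St.a, St.b)) atTop (𝓝 (4 / 9)) := by
    have hcont : Continuous fun σ : ℝ => supersolution σ (St.a, St.b) := by
      simp only [supersolution]
      fun_prop
    simpa [Function.comp_def, supersolution] using (hcont.tendsto 0).comp hσ
  have hle : ∀ᶠ n in atTop, w n (St.a, St.b) ≤ supersolution √(lam n) (St.a, St.b) := by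
    filter_upwards [hσ.eventually_lt_const (by norm_num : (0 : ℝ) < 1 / 100)] with n hn
    have hsup := isSupersolution_supersolution hIsub (Real.sqrt_pos.2 (hlam n).1) hn.le (hgap n)
    rw [Real.sq_sqrt (hlam n).1.le] at hsup
    exact (hsh n).le_of_isSupersolution (hlam n) hsup _
  have hcobdd : IsCoboundedUnder (· ≤ ·) atTop fun n => w n (St.a, St.b) :=
    isCoboundedUnder_le_of_le atTop fun n => (hsh n).nonneg (hlam n) pay_nonneg (St.a, St.b)
  calc limsup (fun n => w n (St.a, St.b)) atTop
      ≤ limsup (fun n => supersolution √(lam n) (St.a, St.b)) atTop :=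
        limsup_le_limsup hle hcobdd hφ.isBoundedUnder_le
    _ = 4 / 9 := hφ.limsup_eq

/-- with J = [0,1/4], min I = 0 and max I = 1/4, along any vanishing
sequence of discount factors lam_n such that the open interval
(sqrt(lam_n)/2, 2 sqrt(lam_n)) does not intersect I, one has
limsup_n y_{lam_n} <= 4/9, where y_lam = v_lam(a,b'). -/
theorem statement15
    (I : Set ℝ) (hIc : IsCompact I) (hIsub : I ⊆ Set.Icc 0 (1 / 2))
    (hImin : IsLeast I 0) (hImax : IsGreatest I (1 / 4))
    (lam : ℕ → ℝ) (hlam : ∀ n, lam n ∈ Set.Ioc (0 : ℝ) 1)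
    (hlam0 : Filter.Tendsto lam Filter.atTop (nhds 0))
    (hgap : ∀ n : ℕ, ∀ s ∈ I, s ∉ Set.Ioo (Real.sqrt (lam n) / 2) (2 * Real.sqrt (lam n)))
    (w : ℕ → St × St → ℝ)
    (hsh : ∀ n, ShapleyEq (Gam I) (Gam (Set.Icc 0 (1 / 4))) pay (lam n) (w n)) :
    Filter.limsup (fun n => w n (St.a, St.b)) Filter.atTop ≤ 4 / 9 :=
  statement15_general I hIsub lam hlam hlam0 hgap w hsh

end GG
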